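/- In algorithm AlgAU, once the graph is out-protected (after time T_0), no node ever becomes unjustifiably faulty: if node v is not unjustifiably faulty at time t ≥ T_0, then v is not unjustifiably faulty at time t + 1. -/
import Mathlib


set_option autoImplicit false

/-- A turn of AlgAU: able turns `Able(ℓ)` for `1 ≤ |ℓ| ≤ k` and faulty turns
`Faulty(ℓ)` for `2 ≤ |ℓ| ≤ k`. -/
inductive Turn where
  | able (ℓ : ℤ)
  | faulty (ℓ : ℤ)
deriving DecidableEq

/-- The level of a turn. -/
def Turn.level : Turn → ℤ
  | .able ℓ => ℓ
  | .faulty ℓ => ℓ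

/-- Whether a turn is able. -/
def Turn.isAble : Turn → Prop
  | .able _ => True
  | .faulty _ => False

/-- A turn belongs to the state set of AlgAU with parameter `k`. -/
def ValidTurn (k : ℤ) : Turn → Prop
  | .able ℓ => 1 ≤ |ℓ| ∧ |ℓ| ≤ k
  | .faulty ℓ => 2 ≤ |ℓ| ∧ |ℓ| ≤ k

/-- The forward operator: `φ(-1) = 1`, `φ(k) = -k`, `φ(ℓ) = ℓ + 1` otherwise. -/
def forwardOp (k : ℤ) (ℓ : ℤ) : ℤ :=
  if ℓ = -1 then 1 else if ℓ = k then -k else ℓ + 1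

/-- Levels `ℓ, ℓ'` are adjacent: `ℓ' ∈ {ℓ, φ(ℓ), φ⁻¹(ℓ)}`. -/
def adjLvl (k : ℤ) (ℓ ℓ' : ℤ) : Prop :=
  ℓ' = ℓ ∨ ℓ' = forwardOp k ℓ ∨ ℓ = forwardOp k ℓ'

/-- `ψ⁻¹(ℓ)`: the level one unit inwards of `ℓ` (same sign, absolute value decreased). -/
def inwd (ℓ : ℤ) : ℤ := if 0 < ℓ then ℓ - 1 else ℓ + 1

/-- `m` is strictly outwards of `ℓ`: same sign and strictly larger absolute value. -/
def strictOut (ℓ m : ℤ) : Prop := (0 < ℓ ∧ ℓ < m) ∨ (ℓ < 0 ∧ m < ℓ)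

/-- The inclusive neighborhood `N⁺(v)`. -/
def closedNbhd {V : Type} (G : SimpleGraph V) (v : V) : Set V := {u | u = v ∨ G.Adj u v}

/-- Node `v` is protected under configuration `c`: all incident edges have adjacent
endpoint levels. -/
def NodeProt {V : Type} (k : ℤ) (G : SimpleGraph V) (c : V → Turn) (v : V) : Prop :=
  ∀ u, G.Adj u v → adjLvl k ((c v).level) ((c u).level)

/-- Node `v` is good: protected and sensing no faulty turn. -/
def NodeGood {V : Type} (k : ℤ) (G : SimpleGraph V) (c : V → Turn) (v : V) : Prop :=
  NodeProt k G c v ∧ ∀ u ∈ closedNbhd G v, (c u).isAble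

/-- Condition for a type AA transition of `v` from `Able(ℓ)` to `Able(φ(ℓ))`:
`v` is good and all sensed levels belong to `{ℓ, φ(ℓ)}`. -/
def AAcond {V : Type} (k : ℤ) (G : SimpleGraph V) (c : V → Turn) (v : V) (ℓ : ℤ) : Prop :=
  c v = .able ℓ ∧ NodeGood k G c v ∧
    ∀ u ∈ closedNbhd G v, (c u).level = ℓ ∨ (c u).level = forwardOp k ℓ

/-- Condition for a type AF transition of `v` from `Able(ℓ)` to `Faulty(ℓ)`
(`2 ≤ |ℓ|`): `v` is not protected or senses the turn `Faulty(ψ⁻¹(ℓ))`. -/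
def AFcond {V : Type} (k : ℤ) (G : SimpleGraph V) (c : V → Turn) (v : V) (ℓ : ℤ) : Prop :=
  c v = .able ℓ ∧ 2 ≤ |ℓ| ∧
    (¬ NodeProt k G c v ∨ ∃ u ∈ closedNbhd G v, c u = .faulty (inwd ℓ))

/-- Condition for a type FA transition of `v` from `Faulty(ℓ)` to `Able(ψ⁻¹(ℓ))`:
`v` senses no level strictly outwards of `ℓ`. -/
def FAcond {V : Type} (G : SimpleGraph V) (c : V → Turn) (v : V) (ℓ : ℤ) : Prop :=
  c v = .faulty ℓ ∧ ∀ u ∈ closedNbhd G v, ¬ strictOut ℓ ((c u).level)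

/-- The new turn `q` of an activated node `v` in one step of AlgAU. -/
def StepNode {V : Type} (k : ℤ) (G : SimpleGraph V) (c : V → Turn) (v : V) (q : Turn) : Prop :=
  (∀ ℓ, AAcond k G c v ℓ → q = .able (forwardOp k ℓ)) ∧
  (∀ ℓ, AFcond k G c v ℓ → ¬ AAcond k G c v ℓ → q = .faulty ℓ) ∧
  (∀ ℓ, FAcond G c v ℓ → q = .able (inwd ℓ)) ∧
  ((∀ ℓ, ¬ AAcond k G c v ℓ ∧ ¬ AFcond k G c v ℓ ∧ ¬ FAcond G c v ℓ) → q = c v)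

/-- One asynchronous step of AlgAU with activation set `A`: activated nodes follow
the transition rules, the others keep their turns. -/
def Step {V : Type} (k : ℤ) (G : SimpleGraph V) (A : Set V) (c c' : V → Turn) : Prop :=
  ∀ v, (v ∉ A → c' v = c v) ∧ (v ∈ A → StepNode k G c v (c' v))

/-- Node `v` is unjustifiably faulty under configuration `c`: it is faulty, yet
protected and with no neighbor in the faulty turn one unit inwards. -/
def UnjustFaulty {V : Type} (k : ℤ) (G : SimpleGraph V) (c : V → Turn) (v : V) : Prop :=
  ∃ ℓ, c v = .faulty ℓ ∧ NodeProt k G c v ∧ ¬ ∃ u, G.Adj u v ∧ c u = .faulty (inwd ℓ)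

/-- The graph is out-protected under `c`: every non-protected edge joins nodes
whose levels have opposite signs. -/
def GraphOutProt {V : Type} (k : ℤ) (G : SimpleGraph V) (c : V → Turn) : Prop :=
  ∀ u v, G.Adj u v → ¬ adjLvl k ((c u).level) ((c v).level) →
    (c u).level * (c v).level < 0

lemma adjLvl_symm {k a b : ℤ} (h : adjLvl k a b) : adjLvl k b a := by
  unfold adjLvl at *; tauto

lemma strictOut_inwd {ℓ : ℤ} (h : 2 ≤ |ℓ|) : strictOut (inwd ℓ) ℓ := by
  rw [le_abs] at h
  simp only [strictOut, inwd]
  split_ifs <;> omega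

lemma not_adj_inwd {k ℓ m : ℤ} (hsign : ℓ * m < 0)
    (hℓ : 2 ≤ |ℓ|) (hℓk : |ℓ| ≤ k) (hm : 2 ≤ |m|) (hmk : |m| ≤ k) :
    ¬ adjLvl k ℓ (inwd m) := by
  rw [le_abs] at hℓ hm
  rw [abs_le] at hℓk hmk
  have hs := mul_neg_iff.mp hsign
  simp only [adjLvl, forwardOp, inwd]
  split_ifs <;> omega

/-- A faulty node sensing a strictly outward level keeps its turn. -/
lemma stayFaulty {V : Type} {k : ℤ} {G : SimpleGraph V} {A : Set V} {c c' : V → Turn}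
    (hstep : Step k G A c c') (u : V) (m : ℤ) (hu : c u = .faulty m)
    (w : V) (hw : w ∈ closedNbhd G u) (hout : strictOut m ((c w).level)) :
    c' u = .faulty m := by
  obtain ⟨h1, h2⟩ := hstep u
  by_cases hA : u ∈ A
  · obtain ⟨_, _, _, h4⟩ := h2 hA
    rw [h4, hu]
    intro ℓ
    refine ⟨fun he => ?_, fun he => ?_, fun he => ?_⟩
    · obtain ⟨he1, -⟩ := he; rw [hu] at he1; exact absurd he1 (by simp)
    · obtain ⟨he1, -⟩ := he; rw [hu] at he1; exact absurd he1 (by simp)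
    · obtain ⟨he1, he2⟩ := he
      rw [hu] at he1
      injection he1 with hm'
      exact he2 w hw (hm' ▸ hout)
  · rw [h1 hA, hu]

/-- The possible evolutions of a node with a witness of non-protectedness. -/
lemma neighborLevel {V : Type} {k : ℤ} {G : SimpleGraph V} {A : Set V} {c c' : V → Turn}
    (hstep : Step k G A c c') (u w : V) (hadj : G.Adj w u)
    (hna : ¬ adjLvl k ((c u).level) ((c w).level)) :
    (c' u).level = (c u).level ∨ (∃ m, c u = .faulty m ∧ c' u = .able (inwd m)) := by
  obtain ⟨h1, h2⟩ := hstep u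
  by_cases hA : u ∈ A
  · obtain ⟨sAA, sAF, sFA, sNone⟩ := h2 hA
    have hnAA : ∀ ℓ, ¬ AAcond k G c u ℓ := by
      intro ℓ ⟨_, ⟨hp, _⟩, _⟩
      exact hna (hp w hadj)
    by_cases hFA : ∃ m, FAcond G c u m
    · obtain ⟨m, hm⟩ := hFA
      exact Or.inr ⟨m, hm.1, sFA m hm⟩
    · by_cases hAF : ∃ m, AFcond k G c u m
      · obtain ⟨m, hm⟩ := hAF
        rw [sAF m hm (hnAA m), hm.1]
        exact Or.inl rfl
      · push_neg at hFA hAF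
        rw [sNone fun ℓ => ⟨hnAA ℓ, hAF ℓ, hFA ℓ⟩]
        exact Or.inl rfl
  · rw [h1 hA]; exact Or.inl rfl

/-- How a node can end up faulty after a step. -/
lemma backStep {V : Type} {k : ℤ} {G : SimpleGraph V} {A : Set V} {c c' : V → Turn}
    (hstep : Step k G A c c') (v : V) (ℓ : ℤ) (hv : c' v = .faulty ℓ) :
    c v = .faulty ℓ ∨ AFcond k G c v ℓ := by
  obtain ⟨h1, h2⟩ := hstep v
  by_cases hA : v ∈ A
  · obtain ⟨sAA, sAF, sFA, sNone⟩ := h2 hA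
    have hnAA : ∀ m, ¬ AAcond k G c v m := by
      intro m hm
      rw [sAA m hm] at hv
      exact absurd hv (by simp)
    have hnFA : ∀ m, ¬ FAcond G c v m := by
      intro m hm
      rw [sFA m hm] at hv
      exact absurd hv (by simp)
    by_cases hAF : ∃ m, AFcond k G c v m
    · obtain ⟨m, hm⟩ := hAF
      rw [sAF m hm (hnAA m)] at hv
      injection hv with hm'
      exact Or.inr (hm' ▸ hm)
    · push_neg at hAF
      rw [← sNone fun m => ⟨hnAA m, hAF m, hnFA m⟩]
      exact Or.inl hv
  · rw [← h1 hA]; exact Or.inl hv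

/-- in AlgAU, once the graph is out-protected (from time `T₀` on),
no node ever becomes unjustifiably faulty: if `v` is not unjustifiably faulty at a
time `t ≥ T₀`, then `v` is not unjustifiably faulty at time `t + 1`. -/
theorem stmt_10 {V : Type} [Fintype V] (G : SimpleGraph V) (D : ℕ) (k : ℤ)
    (hk : k = 3 * D + 2)
    (σ : ℕ → V → Turn) (A : ℕ → Set V)
    (hvalid : ∀ t v, ValidTurn k (σ t v))
    (hstep : ∀ t, Step k G (A t) (σ t) (σ (t + 1)))
    (T0 : ℕ) (hT0 : ∀ s, T0 ≤ s → GraphOutProt k G (σ s))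
    (t : ℕ) (ht : T0 ≤ t)
    (v : V) (h : ¬ UnjustFaulty k G (σ t) v) :
    ¬ UnjustFaulty k G (σ (t + 1)) v := by
  rintro ⟨ℓ, hv', hprot', hnb'⟩
  -- bounds on ℓ from validity at t+1
  have hval : 2 ≤ |ℓ| ∧ |ℓ| ≤ k := by
    have := hvalid (t + 1) v
    rw [hv'] at this
    exact this
  obtain ⟨h2ℓ, hℓk⟩ := hval
  have hcase := backStep (hstep t) v ℓ hv'
  -- the level of v at time t is ℓ in both cases
  have hlev : (σ t v).level = ℓ := by
    rcases hcase with ha | hb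
    · rw [ha]; rfl
    · rw [hb.1]; rfl
  -- Claim Q: no neighbor of v is faulty (inwd ℓ) at time t
  have hQ : ¬ ∃ u, G.Adj u v ∧ σ t u = .faulty (inwd ℓ) := by
    rintro ⟨u, hadj, hu⟩
    apply hnb'
    refine ⟨u, hadj, ?_⟩
    exact stayFaulty (hstep t) u (inwd ℓ) hu v (Or.inr hadj.symm)
      (by rw [hlev]; exact strictOut_inwd h2ℓ)
  -- Claim P: v is protected at time t
  have hP : NodeProt k G (σ t) v := by
    by_contra hnp
    simp only [NodeProt, not_forall] at hnp
    obtain ⟨u, hadj, hna⟩ := hnp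
    rw [hlev] at hna
    have hsign : ℓ * (σ t u).level < 0 := by
      have := hT0 t ht v u hadj.symm
      rw [hlev] at this
      exact this hna
    have hna' : ¬ adjLvl k ((σ t u).level) ((σ t v).level) := by
      rw [hlev]; exact fun hh => hna (adjLvl_symm hh)
    have hprotu := hprot' u hadj
    rw [hv'] at hprotu
    rcases neighborLevel (hstep t) u v hadj.symm hna' with heq | ⟨m, hum, hum'⟩
    · rw [heq] at hprotu
      exact hna hprotu
    · have hmval : 2 ≤ |m| ∧ |m| ≤ k := by
        have := hvalid t u
        rw [hum] at this
        exact this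
      have hml : (σ t u).level = m := by rw [hum]; rfl
      rw [hum'] at hprotu
      exact not_adj_inwd (hml ▸ hsign) h2ℓ hℓk hmval.1 hmval.2 hprotu
  -- conclude
  rcases hcase with ha | hb
  · exact h ⟨ℓ, ha, hP, hQ⟩
  · obtain ⟨hab, _, hd⟩ := hb
    rcases hd with hnp | ⟨u, hu, hfu⟩
    · exact hnp hP
    · rcases hu with rfl | hadj
      · rw [hab] at hfu; exact absurd hfu (by simp)
      · exact hQ ⟨u, hadj, hfu⟩
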